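/- arXiv:2212.11545 — 2 statements merged into one kernel-verified Lean document; each statement's English description precedes it below -/
import Mathlib

section
/- (De Giorgi iteration lemma) Let α ∈ (0,1), M > 0, L > 1, and let (u_k) be a nonincreasing sequence of positive reals such that u_{k+1}^{1-α} ≤ L^k M u_k for all k, and u₀ ≤ M^{-1/α} L^{-(1-α)/α²}. Then u_k → 0 as k → ∞. -/
open Filter

/-- De Giorgi iteration lemma: if `0 < α < 1`, `M > 0`, `L > 1`, `(u k)` is a
nonincreasing sequence of positive reals with `u (k+1) ^ (1-α) ≤ L^k * M * u k`
and `u 0 ≤ 1 / (M ^ (1/α) * L ^ ((1-α)/α²))`, then `u k → 0`. -/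
theorem deGiorgi_iteration
    (α M L : ℝ) (hα : 0 < α) (hα1 : α < 1) (hM : 0 < M) (hL : 1 < L)
    (u : ℕ → ℝ) (hpos : ∀ k, 0 < u k) (hdecr : ∀ k, u (k + 1) ≤ u k)
    (hrec : ∀ k, u (k + 1) ^ (1 - α) ≤ L ^ k * M * u k)
    (h0 : u 0 ≤ 1 / (M ^ (1 / α) * L ^ ((1 - α) / α ^ 2))) :
    Tendsto u atTop (nhds 0) := by
  have hL0 : (0:ℝ) < L := lt_trans one_pos hL
  set C : ℝ := 1 / (M ^ (1 / α) * L ^ ((1 - α) / α ^ 2)) with hCdef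
  have hC0 : 0 < C := by
    apply div_pos one_pos
    positivity
  have e1 : (M ^ (1/α)) ^ α = M := by
    rw [← Real.rpow_mul hM.le, one_div_mul_cancel hα.ne', Real.rpow_one]
  have e2 : (L ^ ((1-α)/α^2)) ^ α = L ^ ((1-α)/α) := by
    rw [← Real.rpow_mul hL0.le]
    congr 1
    field_simp
  have hCα : C ^ α = 1 / (M * L ^ ((1-α)/α)) := by
    rw [hCdef, Real.div_rpow zero_le_one (by positivity), Real.one_rpow,
      Real.mul_rpow (by positivity) (by positivity), e1, e2]
  have hkey : C ^ (-α) = M * L ^ ((1-α)/α) := by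
    rw [Real.rpow_neg hC0.le, hCα, one_div, inv_inv]
  have hbound : ∀ k : ℕ, u k ≤ C * L ^ (-(k:ℝ)/α) := by
    intro k
    induction k with
    | zero =>
      simpa using h0
    | succ k ih =>
      have h2 : u (k+1) ^ (1-α) ≤ L ^ k * M * (C * L ^ (-(k:ℝ)/α)) := by
        refine le_trans (hrec k) ?_
        have : (0:ℝ) ≤ L ^ k * M := by positivity
        exact mul_le_mul_of_nonneg_left ih this
      have heq : L ^ k * M * (C * L ^ (-(k:ℝ)/α))
          = (C * L ^ (-((k:ℕ)+1:ℝ)/α)) ^ (1-α) := by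
        rw [Real.mul_rpow hC0.le (by positivity : (0:ℝ) ≤ L ^ (-((k:ℕ)+1:ℝ)/α))]
        have hC1α : C ^ (1-α) = C * (M * L ^ ((1-α)/α)) := by
          have h1 : C ^ ((1:ℝ) - α) = C ^ (1:ℝ) * C ^ (-α) := by
            rw [← Real.rpow_add hC0]; ring_nf
          rw [h1, Real.rpow_one, hkey]
        rw [hC1α, ← Real.rpow_natCast L k, ← Real.rpow_mul hL0.le]
        have hA : L ^ (k:ℝ) * M * (C * L ^ (-(k:ℝ)/α))
            = M * C * L ^ ((k:ℝ) + -(k:ℝ)/α) := by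
          rw [Real.rpow_add hL0]; ring
        have hB : C * (M * L ^ ((1-α)/α)) * L ^ (-((k:ℕ)+1:ℝ)/α * (1-α))
            = M * C * L ^ ((1-α)/α + -((k:ℕ)+1:ℝ)/α * (1-α)) := by
          rw [Real.rpow_add hL0]; ring
        rw [hA, hB]
        congr 1
        field_simp
        ring
      rw [heq] at h2
      have := (Real.rpow_le_rpow_iff (hpos (k+1)).le (by positivity) (by linarith)).mp h2
      simpa using this
  have hr0 : (0:ℝ) ≤ L ^ (-(1:ℝ)/α) := by positivity
  have hr1 : L ^ (-(1:ℝ)/α) < 1 :=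
    Real.rpow_lt_one_of_one_lt_of_neg hL (by
      rw [neg_div]
      exact neg_neg_of_pos (by positivity))
  have hgeo : Tendsto (fun k : ℕ => C * L ^ (-(k:ℝ)/α)) atTop (nhds 0) := by
    have : (fun k : ℕ => C * L ^ (-(k:ℝ)/α))
        = (fun k : ℕ => C * (L ^ (-(1:ℝ)/α)) ^ k) := by
      funext k
      congr 1
      rw [← Real.rpow_natCast (L ^ (-(1:ℝ)/α)) k, ← Real.rpow_mul hL0.le]
      congr 1
      ring
    rw [this]
    have := (tendsto_pow_atTop_nhds_zero_of_lt_one hr0 hr1).const_mul C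
    simpa using this
  exact tendsto_of_tendsto_of_tendsto_of_le_of_le tendsto_const_nhds hgeo
    (fun k => (hpos k).le) hbound
end

section
/- For the nonlocal perimeter with an integrable-at-infinity kernel, the localized perimeter is almost superadditive on disjoint open sets: if U_i are pairwise disjoint open subsets of ℝⁿ, then Per(E, ⋃_i U_i) ≤ Σ_i Per(E, U_i) ≤ Per(E, ⋃_i U_i) + Σ_i |E ∩ U_i| · φ(d_i), where d_i = min_{j≠i} dist(U_i, U_j) and φ(t) = ∫_{ℝⁿ\B_t(0)} K(h) dh. -/
/-!
Write `L(A, B) = ∫_A ∫_B K(x - y)`, so that `Per(E, U) = L(E ∩ U, Eᶜ) + L(E \ U, U \ E)`, and `L` is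
countably additive in each argument. With `W = ⋃ Uᵢ`, splitting `E \ Uᵢ = (E \ W) ∪ (E ∩ (W \ Uᵢ))`
gives `Σᵢ Per(E, Uᵢ) = Per(E, W) + Σⱼ L(E ∩ Uⱼ, (W \ Uⱼ) \ E)`. The defect is nonnegative, and every
pair it counts is at distance at least `dⱼ`, so its `j`-th term is at most `|E ∩ Uⱼ| φ(dⱼ)` by
translation invariance of Lebesgue measure.
-/

open MeasureTheory
open scoped ENNReal

/-- The localized nonlocal perimeter `Per(E, U)`. -/
noncomputable def nonlocalPerLoc {n : ℕ} (K : EuclideanSpace ℝ (Fin n) → ℝ≥0∞)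
    (E U : Set (EuclideanSpace ℝ (Fin n))) : ℝ≥0∞ :=
  (∫⁻ x in E ∩ U, ∫⁻ y in Eᶜ, K (x - y) ∂volume ∂volume) +
  (∫⁻ x in E \ U, ∫⁻ y in U \ E, K (x - y) ∂volume ∂volume)

/-- The tail mass of the kernel `φ(t) = ∫_{ℝⁿ \ B_t(0)} K(h) dh`. -/
noncomputable def kernelTail {n : ℕ} (K : EuclideanSpace ℝ (Fin n) → ℝ≥0∞)
    (t : ℝ) : ℝ≥0∞ :=
  ∫⁻ h in (Metric.ball (0 : EuclideanSpace ℝ (Fin n)) t)ᶜ, K h ∂volume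

open Function

noncomputable def kernelInteraction {G : Type*} [MeasurableSpace G] [Sub G] (μ : Measure G)
    (K : G → ℝ≥0∞) (A B : Set G) : ℝ≥0∞ :=
  ∫⁻ x in A, ∫⁻ y in B, K (x - y) ∂μ ∂μ

section KernelInteraction

variable {G ι : Type*} [MeasurableSpace G] [Sub G] (μ : Measure G) (K : G → ℝ≥0∞)

@[simp]
lemma kernelInteraction_empty_left (B : Set G) : kernelInteraction μ K ∅ B = 0 := by
  simp [kernelInteraction]

@[simp]
lemma kernelInteraction_empty_right (A : Set G) : kernelInteraction μ K A ∅ = 0 := by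
  simp [kernelInteraction]

lemma kernelInteraction_union_left {A A' : Set G} (hA' : MeasurableSet A') (h : Disjoint A A')
    (B : Set G) :
    kernelInteraction μ K (A ∪ A') B = kernelInteraction μ K A B + kernelInteraction μ K A' B :=
  lintegral_union hA' h

lemma kernelInteraction_iUnion_left [Countable ι] {A : ι → Set G}
    (hA : ∀ i, MeasurableSet (A i)) (hdisj : Pairwise (Disjoint on A)) (B : Set G) :
    kernelInteraction μ K (⋃ i, A i) B = ∑' i, kernelInteraction μ K (A i) B := by
  rw [kernelInteraction, Measure.restrict_iUnion hdisj hA, lintegral_sum_measure]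
  rfl

lemma kernelInteraction_iUnion_right [MeasurableSub₂ G] [SFinite μ] [Countable ι]
    {K : G → ℝ≥0∞} (hK : Measurable K) (A : Set G) {B : ι → Set G}
    (hB : ∀ i, MeasurableSet (B i)) (hdisj : Pairwise (Disjoint on B)) :
    kernelInteraction μ K A (⋃ i, B i) = ∑' i, kernelInteraction μ K A (B i) := by
  simp_rw [kernelInteraction, Measure.restrict_iUnion hdisj hB, lintegral_sum_measure]
  exact lintegral_tsum fun i =>
    (hK.comp measurable_sub).lintegral_prod_right'.aemeasurable

/-- Both sides equal the sum of `kernelInteraction μ K (A ∩ U j) (U i \ B)` over all pairs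
`i ≠ j`. -/
lemma tsum_kernelInteraction_inter_sdiff_comm [MeasurableSub₂ G] [SFinite μ] [Countable ι]
    {K : G → ℝ≥0∞} (hK : Measurable K) {U : ι → Set G} (hU : ∀ i, MeasurableSet (U i))
    (hdisj : Pairwise (Disjoint on U)) {A B : Set G} (hA : MeasurableSet A)
    (hB : MeasurableSet B) :
    ∑' i, kernelInteraction μ K (A ∩ ((⋃ j, U j) \ U i)) (U i \ B)
      = ∑' j, kernelInteraction μ K (A ∩ U j) (((⋃ i, U i) \ U j) \ B) := by
  have hterm : ∀ i j, kernelInteraction μ K (A ∩ (U j \ U i)) (U i \ B)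
      = kernelInteraction μ K (A ∩ U j) ((U i \ U j) \ B) := by
    intro i j
    rcases eq_or_ne i j with rfl | hij
    · simp
    · rw [(hdisj hij).symm.sdiff_eq_left, (hdisj hij).sdiff_eq_left]
  calc ∑' i, kernelInteraction μ K (A ∩ ((⋃ j, U j) \ U i)) (U i \ B)
      = ∑' i, ∑' j, kernelInteraction μ K (A ∩ (U j \ U i)) (U i \ B) := by
        refine tsum_congr fun i => ?_
        rw [Set.iUnion_sdiff, Set.inter_iUnion]
        exact kernelInteraction_iUnion_left μ K (fun j => hA.inter ((hU j).diff (hU i)))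
          (hdisj.mono fun _ _ h => h.mono (Set.inter_subset_right.trans Set.sdiff_subset)
            (Set.inter_subset_right.trans Set.sdiff_subset)) _
    _ = ∑' j, ∑' i, kernelInteraction μ K (A ∩ U j) ((U i \ U j) \ B) := by
        rw [ENNReal.tsum_comm]
        simp_rw [hterm]
    _ = ∑' j, kernelInteraction μ K (A ∩ U j) (((⋃ i, U i) \ U j) \ B) := by
        refine tsum_congr fun j => ?_
        rw [Set.iUnion_sdiff, Set.iUnion_sdiff]
        exact (kernelInteraction_iUnion_right μ hK _ (fun i => ((hU i).diff (hU j)).diff hB)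
          (hdisj.mono fun _ _ h => h.mono (Set.sdiff_subset.trans Set.sdiff_subset)
            (Set.sdiff_subset.trans Set.sdiff_subset))).symm

end KernelInteraction

section Tail

variable {G : Type*} [NormedAddCommGroup G] [MeasurableSpace G] [BorelSpace G]
  (μ : Measure G) [μ.IsAddLeftInvariant] [μ.IsNegInvariant] (K : G → ℝ≥0∞)

lemma setLIntegral_compl_ball_sub_left (x : G) (t : ℝ) :
    ∫⁻ y in (Metric.ball x t)ᶜ, K (x - y) ∂μ = ∫⁻ h in (Metric.ball 0 t)ᶜ, K h ∂μ := by
  have hpre : (fun y => x - y) ⁻¹' (Metric.ball (0 : G) t)ᶜ = (Metric.ball x t)ᶜ := by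
    ext y
    simp [dist_eq_norm, norm_sub_rev]
  rw [← hpre]
  exact (Measure.measurePreserving_sub_left μ x).setLIntegral_comp_preimage_emb
    (MeasurableEquiv.subLeft x).measurableEmbedding K _

lemma kernelInteraction_le_mul_tail {A B : Set G} (hA : MeasurableSet A) {t : ℝ}
    (hAB : ∀ x ∈ A, ∀ y ∈ B, t ≤ dist x y) :
    kernelInteraction μ K A B ≤ μ A * ∫⁻ h in (Metric.ball 0 t)ᶜ, K h ∂μ := by
  have hB : ∀ x ∈ A, B ⊆ (Metric.ball x t)ᶜ := fun x hx y hy =>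
    (dist_comm x y ▸ hAB x hx y hy).not_gt
  calc kernelInteraction μ K A B
      ≤ ∫⁻ x in A, ∫⁻ y in (Metric.ball x t)ᶜ, K (x - y) ∂μ ∂μ :=
        setLIntegral_mono' hA fun x hx => lintegral_mono_set (hB x hx)
    _ = μ A * ∫⁻ h in (Metric.ball 0 t)ᶜ, K h ∂μ := by
        simp_rw [setLIntegral_compl_ball_sub_left, setLIntegral_const, mul_comm]

end Tail

section Perimeter

variable {n : ℕ} {ι : Type*} {K : EuclideanSpace ℝ (Fin n) → ℝ≥0∞} {E : Set (EuclideanSpace ℝ (Fin n))}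

lemma nonlocalPerLoc_eq_kernelInteraction (U : Set (EuclideanSpace ℝ (Fin n))) :
    nonlocalPerLoc K E U
      = kernelInteraction volume K (E ∩ U) Eᶜ + kernelInteraction volume K (E \ U) (U \ E) :=
  rfl

lemma tsum_nonlocalPerLoc_eq [Countable ι] (hK : Measurable K) (hE : MeasurableSet E)
    {U : ι → Set (EuclideanSpace ℝ (Fin n))} (hU : ∀ i, MeasurableSet (U i))
    (hdisj : Pairwise (Disjoint on U)) :
    ∑' i, nonlocalPerLoc K E (U i) = nonlocalPerLoc K E (⋃ i, U i)
      + ∑' j, kernelInteraction volume K (E ∩ U j) (((⋃ i, U i) \ U j) \ E) := by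
  set W := ⋃ i, U i
  have hsplit : ∀ i B, kernelInteraction volume K (E \ U i) B
      = kernelInteraction volume K (E \ W) B + kernelInteraction volume K (E ∩ (W \ U i)) B := by
    intro i B
    have hUW : U i ⊆ W := Set.subset_iUnion U i
    rw [← kernelInteraction_union_left volume K (hE.inter ((MeasurableSet.iUnion hU).diff (hU i)))
      (Set.disjoint_left.mpr fun _ hx hx' => hx.2 hx'.2.1)]
    congr 1
    ext x
    have := @hUW x
    simp only [Set.mem_sdiff, Set.mem_union, Set.mem_inter_iff]
    tauto
  simp_rw [nonlocalPerLoc_eq_kernelInteraction, hsplit, ENNReal.tsum_add]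
  rw [← tsum_kernelInteraction_inter_sdiff_comm volume hK hU hdisj hE hE, Set.inter_iUnion,
    kernelInteraction_iUnion_left volume K (fun i => hE.inter (hU i))
      (hdisj.mono fun _ _ h => h.mono Set.inter_subset_right Set.inter_subset_right),
    Set.iUnion_sdiff, kernelInteraction_iUnion_right volume hK _ (fun i => (hU i).diff hE)
      (hdisj.mono fun _ _ h => h.mono Set.sdiff_subset Set.sdiff_subset), add_assoc]

end Perimeter

theorem nonlocalPerLoc_almost_superadditive_general {n : ℕ}
    (K : EuclideanSpace ℝ (Fin n) → ℝ≥0∞) (hKmeas : Measurable K)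
    (E : Set (EuclideanSpace ℝ (Fin n))) (hE : MeasurableSet E)
    (U : ℕ → Set (EuclideanSpace ℝ (Fin n)))
    (hUopen : ∀ i, IsOpen (U i))
    (hUdisj : ∀ i j, i ≠ j → U i ∩ U j = ∅)
    (d : ℕ → ℝ)
    (hdist : ∀ i j, i ≠ j → ∀ x ∈ U i, ∀ y ∈ U j, d i ≤ dist x y) :
    nonlocalPerLoc K E (⋃ i, U i) ≤ ∑' i : ℕ, nonlocalPerLoc K E (U i) ∧
    ∑' i : ℕ, nonlocalPerLoc K E (U i)
      ≤ nonlocalPerLoc K E (⋃ i, U i)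
        + ∑' i : ℕ, volume (E ∩ U i) * kernelTail K (d i) := by
  have hU : ∀ i, MeasurableSet (U i) := fun i => (hUopen i).measurableSet
  have hdisj : Pairwise (Disjoint on U) := fun i j hij =>
    Set.disjoint_iff_inter_eq_empty.mpr (hUdisj i j hij)
  rw [tsum_nonlocalPerLoc_eq hKmeas hE hU hdisj]
  refine ⟨le_self_add, add_le_add_right (ENNReal.tsum_le_tsum fun j => ?_) _⟩
  refine kernelInteraction_le_mul_tail volume K (hE.inter (hU j)) fun x hx y hy => ?_
  obtain ⟨i, hyi⟩ := Set.mem_iUnion.mp hy.1.1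
  exact hdist j i (fun hji => hy.1.2 (hji ▸ hyi)) x hx.2 y hyi

/-- Almost superadditivity of the localized nonlocal perimeter on pairwise
disjoint open sets: `Per(E, ⋃ᵢ Uᵢ) ≤ Σᵢ Per(E, Uᵢ) ≤ Per(E, ⋃ᵢ Uᵢ) + Σᵢ |E ∩ Uᵢ| φ(dᵢ)`,
where `dᵢ` is (a lower bound for) the distance from `Uᵢ` to the other pieces. -/
theorem nonlocalPerLoc_almost_superadditive {n : ℕ}
    (K : EuclideanSpace ℝ (Fin n) → ℝ≥0∞) (hKmeas : Measurable K)
    (hKsymm : ∀ h, K (-h) = K h)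
    (E : Set (EuclideanSpace ℝ (Fin n))) (hE : MeasurableSet E)
    (U : ℕ → Set (EuclideanSpace ℝ (Fin n)))
    (hUopen : ∀ i, IsOpen (U i))
    (hUdisj : ∀ i j, i ≠ j → U i ∩ U j = ∅)
    (d : ℕ → ℝ) (hd : ∀ i, 0 < d i)
    (hdist : ∀ i j, i ≠ j → ∀ x ∈ U i, ∀ y ∈ U j, d i ≤ dist x y) :
    nonlocalPerLoc K E (⋃ i, U i) ≤ ∑' i : ℕ, nonlocalPerLoc K E (U i) ∧
    ∑' i : ℕ, nonlocalPerLoc K E (U i)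
      ≤ nonlocalPerLoc K E (⋃ i, U i)
        + ∑' i : ℕ, volume (E ∩ U i) * kernelTail K (d i) :=
  nonlocalPerLoc_almost_superadditive_general K hKmeas E hE U hUopen hUdisj d hdist
end
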